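/- (Admissibility of the A-star heuristic.) Define h(U) = Σ over x ∉ U of d(x, univ \ {x}). For every finite set U of variables and every duplicate-free list M enumerating exactly the set univ \ U, one has h(U) ≤ Σ over positions k of d(M_k, U ∪ S_k), where S_k is the set of entries of M preceding position k. That is, h(U) never exceeds the length of any path from the lattice node U to the sink, so h underestimates the true remaining cost. -/

import Mathlib

/-- `d s x U` : the score of selecting optimal parents of `x` from `U`,
defined as the minimum of `s x W` over all subsets `W ⊆ U`. -/
noncomputable def d {X : Type*} [DecidableEq X] (s : X → Finset X → ℝ)
    (x : X) (U : Finset X) : ℝ :=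
  U.powerset.inf' (Finset.powerset_nonempty U) (s x)

/-- `Qfrom s M U` : the cost of extending the lattice node `U` along the
ordering `M`, i.e. `Σ_k d(M_k, U ∪ S_k)` where `S_k` is the set of entries
of `M` preceding position `k`. -/
noncomputable def Qfrom {X : Type*} [DecidableEq X] (s : X → Finset X → ℝ) :
    List X → Finset X → ℝ
  | [], _ => 0
  | x :: M, U => d s x U + Qfrom s M (insert x U)

/-- `Q s L` : the cost of the ordering `L`, i.e. `Σ_k d(L_k, S_k)` where
`S_k` is the set of entries of `L` preceding position `k`; this is the score
of the network in which each variable's parents are chosen optimally from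
its predecessors in `L`. -/
noncomputable def Q {X : Type*} [DecidableEq X] (s : X → Finset X → ℝ)
    (L : List X) : ℝ :=
  Qfrom s L ∅

section

variable {X : Type*} [DecidableEq X] (s : X → Finset X → ℝ)

theorem d_antitone (x : X) : Antitone (d s x) := fun _ _ hUV =>
  Finset.inf'_mono _ (Finset.powerset_mono.mpr hUV) _

/-- In `Qfrom s M U` each `x` of `M` chooses its parents from `U` and its predecessors in `M`,
a subset of `univ \ {x}` since `M` is duplicate-free and avoids `U`. -/
theorem sum_d_compl_le_Qfrom [Fintype X] (M : List X) (hM : M.Nodup) :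
    ∀ U : Finset X, (∀ x ∈ M, x ∉ U) →
      (M.map fun y => d s y (Finset.univ \ {y})).sum ≤ Qfrom s M U := by
  induction M with
  | nil => simp [Qfrom]
  | cons x M ih =>
    intro U hMU
    obtain ⟨hxM, hM⟩ := List.nodup_cons.mp hM
    have hU : U ⊆ Finset.univ \ {x} :=
      Finset.subset_sdiff.mpr ⟨Finset.subset_univ U,
        Finset.disjoint_singleton_right.mpr (hMU x List.mem_cons_self)⟩
    have hMx : ∀ y ∈ M, y ∉ insert x U := fun y hy => by
      rw [Finset.mem_insert, not_or]
      exact ⟨ne_of_mem_of_not_mem hy hxM, hMU y (List.mem_cons_of_mem x hy)⟩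
    rw [List.map_cons, List.sum_cons, Qfrom]
    exact add_le_add (d_antitone s x hU) (ih hM (insert x U) hMx)

end

theorem astar_heuristic_admissible_general
    {X : Type*} [Fintype X] [DecidableEq X]
    (s : X → Finset X → ℝ) (U : Finset X) (M : List X)
    (hM : M.Nodup) (hMset : M.toFinset = Finset.univ \ U) :
    (∑ y ∈ Finset.univ \ U, d s y (Finset.univ \ {y})) ≤ Qfrom s M U := by
  have hMU : ∀ x ∈ M, x ∉ U := fun x hx =>
    (Finset.mem_sdiff.mp (hMset ▸ List.mem_toFinset.mpr hx)).2
  rw [← hMset, List.sum_toFinset _ hM]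
  exact sum_d_compl_le_Qfrom s M hM U hMU

/-- Admissibility of the A-star heuristic: `h(U) = Σ_{x ∉ U} d(x, univ \ {x})`
never exceeds the cost `Σ_k d(M_k, U ∪ S_k)` of any path from the lattice
node `U` to the sink, given by a duplicate-free list `M` enumerating exactly
`univ \ U`. -/
theorem astar_heuristic_admissible
    {X : Type*} [Fintype X] [DecidableEq X] [Nonempty X]
    (s : X → Finset X → ℝ) (U : Finset X) (M : List X)
    (hM : M.Nodup) (hMset : M.toFinset = Finset.univ \ U) :
    (∑ y ∈ Finset.univ \ U, d s y (Finset.univ \ {y})) ≤ Qfrom s M U :=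
  astar_heuristic_admissible_general s U M hM hMset
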